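/- arXiv:1007.3706 — 2 statements merged into one kernel-verified Lean document; each statement's English description precedes it below -/
import Mathlib

section
/- Let (z(k))_{k≥0} be a Markov sequence of random variables taking values in a set C, let L : C → ℝ with L⋆ = inf_C L > −∞, suppose L(z(k)) is nonincreasing along every realization, and suppose there is a(ε) > 0 and a measurable set Γ(ε) ⊆ C such that E[L(z(k+1)) | z(k)] − L(z(k)) ≤ −a(ε)·1{z(k) ∈ Γ(ε)} and E[L(z(k+1)) | z(k)] ≤ L(z(k)) always. Then Σ_{k=0}^∞ Prob(z(k) ∈ Γ(ε)) ≤ (L(z(0)) − L⋆)/a(ε), where z(0) is deterministic. -/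
/-!
Integrating the drift inequality turns it into a deterministic recursion for the expected values
`u k = 𝔼[L (z k)]`, namely `u (k + 1) ≤ u k - a * P(z k ∈ Γ)`. Telescoping bounds every partial
sum of `a * P(z k ∈ Γ)` by `u 0 - u N ≤ L z0 - L⋆`, and hence also the whole series.
-/

open MeasureTheory Finset

theorem sum_range_le_div_of_le_sub_mul {u p : ℕ → ℝ} {a b : ℝ} (ha : 0 < a)
    (hstep : ∀ k, u (k + 1) ≤ u k - a * p k) (hb : ∀ k, b ≤ u k) (N : ℕ) :
    ∑ k ∈ range N, p k ≤ (u 0 - b) / a := by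
  have htelescope : ∀ n, a * ∑ k ∈ range n, p k ≤ u 0 - u n := by
    intro n
    induction n with
    | zero => simp
    | succ n ih =>
      rw [sum_range_succ, mul_add]
      linarith [hstep n]
  rw [le_div_iff₀ ha, mul_comm]
  linarith [htelescope N, hb N]

theorem tsum_measure_le_ofReal_of_sum_range_measureReal_le {Ω : Type*} [MeasurableSpace Ω]
    {μ : Measure Ω} [IsFiniteMeasure μ] {s : ℕ → Set Ω} {c : ℝ}
    (h : ∀ N, ∑ k ∈ range N, μ.real (s k) ≤ c) :
    ∑' k, μ (s k) ≤ ENNReal.ofReal c :=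
  ENNReal.tsum_le_of_sum_range_le fun N => calc
    ∑ k ∈ range N, μ (s k) = ENNReal.ofReal (∑ k ∈ range N, μ.real (s k)) := by
      rw [ENNReal.ofReal_sum_of_nonneg fun k _ => measureReal_nonneg]
      exact sum_congr rfl fun k _ => (ofReal_measureReal (measure_ne_top μ _)).symm
    _ ≤ ENNReal.ofReal c := ENNReal.ofReal_le_ofReal (h N)

theorem integral_le_sub_measureReal_of_condExp_sub_le {Ω : Type*} {m m₀ : MeasurableSpace Ω}
    {μ : Measure Ω} [IsFiniteMeasure μ] (hm : m ≤ m₀) {f g : Ω → ℝ} (hg : Integrable g μ)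
    {s : Set Ω} (hs : MeasurableSet s) {a : ℝ}
    (hdrift : ∀ᵐ ω ∂μ, μ[f | m] ω - g ω ≤ -a * s.indicator (fun _ => (1 : ℝ)) ω) :
    ∫ ω, f ω ∂μ ≤ ∫ ω, g ω ∂μ - a * μ.real s := by
  have hind : Integrable (fun ω => -a * s.indicator (fun _ => (1 : ℝ)) ω) μ :=
    ((integrable_const (1 : ℝ)).indicator hs).const_mul (-a)
  have hmono := integral_mono_ae (integrable_condExp.sub hg) hind hdrift
  rw [Pi.sub_def, integral_sub integrable_condExp hg, integral_condExp hm, integral_const_mul,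
    integral_indicator_const _ hs, smul_eq_mul, mul_one] at hmono
  linarith

open MeasureTheory in
theorem counting_estimate_drift_general
    {Ω E : Type*} [MeasurableSpace Ω] [mE : MeasurableSpace E]
    (μ : Measure Ω) [IsProbabilityMeasure μ]
    (z : ℕ → Ω → E) (hz : ∀ k, Measurable (z k))
    (C Γ : Set E) (hΓ : MeasurableSet Γ)
    (hzC : ∀ k ω, z k ω ∈ C)
    (L : E → ℝ) (Lstar : ℝ) (hLb : ∀ x ∈ C, Lstar ≤ L x)
    (hint : ∀ k, Integrable (fun ω => L (z k ω)) μ)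
    (a : ℝ) (ha : 0 < a)
    (hdrift : ∀ k, ∀ᵐ ω ∂μ,
      (μ[fun ω' => L (z (k + 1) ω') | MeasurableSpace.comap (z k) mE]) ω
        - L (z k ω) ≤ -a * (Γ.indicator (fun _ => (1 : ℝ)) (z k ω)))
    (z0 : E) (hdet : z 0 = fun _ => z0) :
    ∑' k, μ {ω | z k ω ∈ Γ} ≤ ENNReal.ofReal ((L z0 - Lstar) / a) := by
  have hstep : ∀ k, ∫ ω, L (z (k + 1) ω) ∂μ ≤ ∫ ω, L (z k ω) ∂μ - a * μ.real {ω | z k ω ∈ Γ} :=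
    fun k => integral_le_sub_measureReal_of_condExp_sub_le (hz k).comap_le (hint k)
      (hz k hΓ) (hdrift k)
  have hlow : ∀ k, Lstar ≤ ∫ ω, L (z k ω) ∂μ := fun k => by
    simpa using integral_mono (integrable_const Lstar) (hint k) fun ω => hLb _ (hzC k ω)
  refine tsum_measure_le_ofReal_of_sum_range_measureReal_le fun N => ?_
  simpa [hdet] using sum_range_le_div_of_le_sub_mul ha hstep hlow N

open MeasureTheory in
theorem counting_estimate_drift
    {Ω E : Type*} [MeasurableSpace Ω] [mE : MeasurableSpace E]
    (μ : Measure Ω) [IsProbabilityMeasure μ]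
    (z : ℕ → Ω → E) (hz : ∀ k, Measurable (z k))
    (C Γ : Set E) (hΓ : MeasurableSet Γ) (hΓC : Γ ⊆ C)
    (hzC : ∀ k ω, z k ω ∈ C)
    (L : E → ℝ) (Lstar : ℝ) (hLb : ∀ x ∈ C, Lstar ≤ L x)
    (hint : ∀ k, Integrable (fun ω => L (z k ω)) μ)
    (a : ℝ) (ha : 0 < a)
    (hdrift : ∀ k, ∀ᵐ ω ∂μ,
      (μ[fun ω' => L (z (k + 1) ω') | MeasurableSpace.comap (z k) mE]) ω
        - L (z k ω) ≤ -a * (Γ.indicator (fun _ => (1 : ℝ)) (z k ω)))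
    (z0 : E) (hz0 : z0 ∈ C) (hdet : z 0 = fun _ => z0) :
    ∑' k, μ {ω | z k ω ∈ Γ} ≤ ENNReal.ofReal ((L z0 - Lstar) / a) :=
  counting_estimate_drift_general (mE := mE) μ z hz C Γ hΓ hzC L Lstar hLb hint a ha hdrift z0 hdet
end

section
/- Let L(x₁,…,x_S) = Σ_s f_s(x_s) + W(x₁,…,x_S) where each f_s : ℝ^{n_s} → ℝ is convex (possibly nondifferentiable, e.g., a nonnegative multiple of the ℓ₁ norm) and W is convex and continuously differentiable, and let C = C₁ × ⋯ × C_S with each C_s closed and convex. If z ∈ C is block-optimal for L over C (each block z_s minimizes L over C_s with other blocks fixed), then z is a global minimizer of L over C. -/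
/-!
Let `D` be the derivative of `W` at `z`. Moving only block `s` from `z s` towards `y s`, block
optimality and convexity of `f s` say that `t ↦ t (f s (y s) - f s (z s)) + W (z + t vₛ)`, with
`vₛ = Pi.single s (y s - z s)`, is minimal on `[0, 1]` at `t = 0`; hence
`0 ≤ f s (y s) - f s (z s) + D vₛ`. Summing over `s`, the directions `vₛ` add up to `y - z`, and
the gradient inequality `D (y - z) ≤ W y - W z` of the convex function `W` finishes the proof.
Smoothness of `W` is what lets the block directions be added: for a nondifferentiable coupling
term block optimality does not imply global optimality.
-/

open Set Function

theorem HasDerivAt.nonneg_of_isMinOn_Icc {φ : ℝ → ℝ} {φ' : ℝ} (hφ : HasDerivAt φ φ' 0)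
    (hmin : IsMinOn φ (Icc 0 1) 0) : 0 ≤ φ' := by
  have hcone : (1 : ℝ) ∈ posTangentConeAt (Icc 0 1) 0 :=
    mem_posTangentConeAt_of_segment_subset (by simp [segment_eq_Icc])
  simpa using hmin.localize.hasFDerivWithinAt_nonneg hφ.hasFDerivAt.hasFDerivWithinAt hcone

section LineSegments

variable {E : Type*} [NormedAddCommGroup E] [NormedSpace ℝ E]

theorem ConvexOn.le_add_smul_sub {s : Set E} {g : E → ℝ} (hg : ConvexOn ℝ s g) {x y : E}
    (hx : x ∈ s) (hy : y ∈ s) {t : ℝ} (ht : t ∈ Icc (0 : ℝ) 1) :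
    g (x + t • (y - x)) ≤ g x + t * (g y - g x) := by
  have h := hg.2 hx hy (sub_nonneg.2 ht.2) ht.1 (sub_add_cancel 1 t)
  rw [show (1 - t) • x + t • y = x + t • (y - x) by module, smul_eq_mul, smul_eq_mul] at h
  linarith

theorem DifferentiableAt.hasDerivAt_comp_add_smul {W : E → ℝ} {x : E}
    (hW : DifferentiableAt ℝ W x) (v : E) :
    HasDerivAt (fun t : ℝ => W (x + t • v)) (fderiv ℝ W x v) 0 := by
  have hline : HasDerivAt (fun t : ℝ => x + t • v) v 0 := by
    simpa using ((hasDerivAt_id (0 : ℝ)).smul_const v).const_add x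
  have hW' : HasFDerivAt W (fderiv ℝ W x) (x + (0 : ℝ) • v) := by simpa using hW.hasFDerivAt
  exact hW'.comp_hasDerivAt 0 hline

theorem ConvexOn.fderiv_sub_le {s : Set E} {W : E → ℝ} (hW : ConvexOn ℝ s W) {x y : E}
    (hx : x ∈ s) (hy : y ∈ s) (hd : DifferentiableAt ℝ W x) :
    fderiv ℝ W x (y - x) ≤ W y - W x := by
  have hφ : HasDerivAt (fun t : ℝ => t * (W y - W x) - W (x + t • (y - x)))
      (W y - W x - fderiv ℝ W x (y - x)) 0 :=
    (hasDerivAt_mul_const _).sub (hd.hasDerivAt_comp_add_smul (y - x))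
  have hmin : IsMinOn (fun t : ℝ => t * (W y - W x) - W (x + t • (y - x))) (Icc 0 1) 0 :=
    fun t ht => by
      have := hW.le_add_smul_sub hx hy ht
      simp only [mem_ofPred_eq, zero_mul, zero_smul, add_zero]
      linarith
  linarith [hφ.nonneg_of_isMinOn_Icc hmin]

end LineSegments

theorem Fintype.sum_apply_update_sub {ι M : Type*} [Fintype ι] [DecidableEq ι] {α : ι → Type*}
    [AddCommGroup M] (f : ∀ i, α i → M) (x : ∀ i, α i) (i : ι) (w : α i) :
    ∑ j, f j (update x i w j) - ∑ j, f j (x j) = f i w - f i (x i) := by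
  simp_rw [apply_update f]
  rw [Finset.sum_update_of_mem (Finset.mem_univ i), Finset.sdiff_singleton_eq_erase,
    ← Finset.add_sum_erase _ _ (Finset.mem_univ i)]
  abel

theorem update_add_smul_eq_add_smul_single {ι R : Type*} [DecidableEq ι] [Semiring R]
    {E : ι → Type*} [∀ i, AddCommMonoid (E i)] [∀ i, Module R (E i)]
    (x : ∀ i, E i) (i : ι) (v : E i) (t : R) :
    update x i (x i + t • v) = x + t • Pi.single i v := by
  ext j
  rcases eq_or_ne j i with rfl | hj
  · simp
  · simp [hj]

section BlockCoordinate

variable {ι : Type*} [Fintype ι] [DecidableEq ι] {E : ι → Type*}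
  [∀ i, NormedAddCommGroup (E i)] [∀ i, NormedSpace ℝ (E i)]

theorem blockOptimal_directional_nonneg (f : ∀ i, E i → ℝ) (W : (∀ i, E i) → ℝ)
    {z : ∀ i, E i} {i : ι} {C : Set (E i)} (hC : Convex ℝ C) (hf : ConvexOn ℝ C (f i))
    (hW : DifferentiableAt ℝ W z) (hzC : z i ∈ C)
    (hblock : ∀ w ∈ C, ∑ j, f j (z j) + W z ≤ ∑ j, f j (update z i w j) + W (update z i w))
    {y : E i} (hy : y ∈ C) :
    0 ≤ f i y - f i (z i) + fderiv ℝ W z (Pi.single i (y - z i)) := by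
  have hφ : HasDerivAt (fun t : ℝ => t * (f i y - f i (z i)) + W (z + t • Pi.single i (y - z i)))
      (f i y - f i (z i) + fderiv ℝ W z (Pi.single i (y - z i))) 0 :=
    (hasDerivAt_mul_const _).add (hW.hasDerivAt_comp_add_smul _)
  refine hφ.nonneg_of_isMinOn_Icc fun t ht => ?_
  have hconv := hf.le_add_smul_sub hzC hy ht
  have hopt := hblock _ (hC.add_smul_sub_mem hzC hy ht)
  have hsep := Fintype.sum_apply_update_sub f z i (z i + t • (y - z i))
  rw [update_add_smul_eq_add_smul_single] at hopt hsep
  simp only [mem_ofPred_eq, zero_mul, zero_smul, add_zero]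
  linarith

theorem le_of_blockOptimal_of_differentiableAt (f : ∀ i, E i → ℝ) (W : (∀ i, E i) → ℝ)
    {C : ∀ i, Set (E i)} (hC : ∀ i, Convex ℝ (C i)) (hf : ∀ i, ConvexOn ℝ (C i) (f i))
    (hWconv : ConvexOn ℝ (univ.pi C) W) {z : ∀ i, E i} (hW : DifferentiableAt ℝ W z)
    (hzC : ∀ i, z i ∈ C i)
    (hblock : ∀ i, ∀ w ∈ C i,
      ∑ j, f j (z j) + W z ≤ ∑ j, f j (update z i w j) + W (update z i w))
    {y : ∀ i, E i} (hy : ∀ i, y i ∈ C i) :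
    ∑ j, f j (z j) + W z ≤ ∑ j, f j (y j) + W y := by
  have hblocks : 0 ≤ ∑ i, (f i (y i) - f i (z i)) + fderiv ℝ W z (y - z) := by
    have := Finset.sum_nonneg (s := Finset.univ) fun i _ =>
      blockOptimal_directional_nonneg f W (hC i) (hf i) hW (hzC i) (hblock i) (hy i)
    rwa [Finset.sum_add_distrib, ← map_sum, Finset.univ_sum_single (fun i => y i - z i)] at this
  have hgrad := hWconv.fderiv_sub_le (mem_univ_pi.2 hzC) (mem_univ_pi.2 hy) hW
  rw [Finset.sum_sub_distrib] at hblocks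
  linarith

end BlockCoordinate

theorem block_optimal_implies_global_separable_plus_smooth_general
    (S : ℕ) (n : Fin S → ℕ)
    (f : ∀ s, EuclideanSpace ℝ (Fin (n s)) → ℝ)
    (hf : ∀ s, ConvexOn ℝ Set.univ (f s))
    (W : (∀ s, EuclideanSpace ℝ (Fin (n s))) → ℝ)
    (hWconv : ConvexOn ℝ Set.univ W)
    (hWsmooth : ContDiff ℝ 1 W)
    (C : ∀ s, Set (EuclideanSpace ℝ (Fin (n s))))
    (hCconv : ∀ s, Convex ℝ (C s))
    (z : ∀ s, EuclideanSpace ℝ (Fin (n s))) (hzC : ∀ s, z s ∈ C s)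
    (hblock : ∀ s, ∀ w ∈ C s,
      (∑ s', f s' (z s')) + W z ≤
        (∑ s', f s' (Function.update z s w s')) + W (Function.update z s w)) :
    ∀ y : ∀ s, EuclideanSpace ℝ (Fin (n s)), (∀ s, y s ∈ C s) →
      (∑ s', f s' (z s')) + W z ≤ (∑ s', f s' (y s')) + W y := fun _ hy =>
  le_of_blockOptimal_of_differentiableAt f W hCconv
    (fun s => (hf s).subset (subset_univ _) (hCconv s))
    (hWconv.subset (subset_univ _) (convex_pi fun s _ => hCconv s))
    (hWsmooth.differentiable one_ne_zero z) hzC hblock hy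

theorem block_optimal_implies_global_separable_plus_smooth
    (S : ℕ) (n : Fin S → ℕ)
    (f : ∀ s, EuclideanSpace ℝ (Fin (n s)) → ℝ)
    (hf : ∀ s, ConvexOn ℝ Set.univ (f s))
    (W : (∀ s, EuclideanSpace ℝ (Fin (n s))) → ℝ)
    (hWconv : ConvexOn ℝ Set.univ W)
    (hWsmooth : ContDiff ℝ 1 W)
    (C : ∀ s, Set (EuclideanSpace ℝ (Fin (n s))))
    (hCconv : ∀ s, Convex ℝ (C s)) (hCclosed : ∀ s, IsClosed (C s))
    (z : ∀ s, EuclideanSpace ℝ (Fin (n s))) (hzC : ∀ s, z s ∈ C s)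
    (hblock : ∀ s, ∀ w ∈ C s,
      (∑ s', f s' (z s')) + W z ≤
        (∑ s', f s' (Function.update z s w s')) + W (Function.update z s w)) :
    ∀ y : ∀ s, EuclideanSpace ℝ (Fin (n s)), (∀ s, y s ∈ C s) →
      (∑ s', f s' (z s')) + W z ≤ (∑ s', f s' (y s')) + W y :=
  block_optimal_implies_global_separable_plus_smooth_general S n f hf W hWconv hWsmooth C hCconv z
    hzC hblock
end
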